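/- arXiv:2502.04697 — 2 statements merged into one kernel-verified Lean document; each statement's English description precedes it below -/
import Mathlib

section
/- Let N ≥ 1 and m : ZMod N → ℝ, and let m̄ = (1/N) ∑_{i ∈ ZMod N} m(i) be the mean. Then ∑_{i ∈ ZMod N} (m(i) − m̄)² ≤ N² · ∑_{i ∈ ZMod N} (m(i) − m(i−1))². -/
/-!
Walking forward around the cycle from `j` to `i` crosses each edge at most once, so any two
values of `m` differ by at most `S = ∑ₖ |m k - m (k - 1)|`. Hence every deviation from the mean
is at most `S`, the left-hand side is at most `N S²`, and Cauchy–Schwarz gives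
`S² ≤ N ∑ₖ (m k - m (k - 1))²`.
-/

open Finset

namespace ZMod

variable {N : ℕ} [NeZero N]

lemma sum_range_natCast_le_sum {M : Type*} [AddCommMonoid M] [Preorder M] [AddLeftMono M]
    {f : ZMod N → M} (hf : ∀ k, 0 ≤ f k) {r : ℕ} (hr : r ≤ N) :
    ∑ t ∈ range r, f t ≤ ∑ k, f k := by
  rw [← sum_image fun a ha b hb hab => ?_]
  · exact sum_le_sum_of_subset_of_nonneg (subset_univ _) fun k _ _ => hf k
  · rw [mem_coe, mem_range] at ha hb
    simpa [val_natCast_of_lt (ha.trans_le hr), val_natCast_of_lt (hb.trans_le hr)] using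
      congrArg val hab

lemma norm_sub_le_sum_norm_sub_pred {E : Type*} [SeminormedAddCommGroup E] (m : ZMod N → E)
    (i j : ZMod N) : ‖m i - m j‖ ≤ ∑ k, ‖m k - m (k - 1)‖ := by
  obtain ⟨r, hr, rfl⟩ : ∃ r < N, i = j + r :=
    ⟨(i - j).val, val_lt _, by rw [natCast_zmod_val]; ring⟩
  set g : ZMod N → ℝ := fun k => ‖m k - m (k - 1)‖
  calc ‖m (j + r) - m j‖ = ‖∑ t ∈ range r, (m (j + (t + 1 : ℕ)) - m (j + t))‖ := by
        rw [sum_range_sub (fun t : ℕ => m (j + t))]; simp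
    _ ≤ ∑ t ∈ range r, ‖m (j + (t + 1 : ℕ)) - m (j + t)‖ := norm_sum_le _ _
    _ = ∑ t ∈ range r, g (j + 1 + t) := by
        refine sum_congr rfl fun t _ => ?_
        simp only [g]; push_cast; ring_nf
    _ ≤ ∑ k, g (j + 1 + k) :=
        sum_range_natCast_le_sum (f := fun k => g (j + 1 + k)) (fun _ => norm_nonneg _) hr.le
    _ = ∑ k, g k := Equiv.sum_comp (Equiv.addLeft (j + 1)) g

end ZMod

lemma abs_sub_mean_le {ι : Type*} [Fintype ι] [Nonempty ι] (x : ι → ℝ) {i : ι} {S : ℝ}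
    (h : ∀ j, |x i - x j| ≤ S) : |x i - (1 / Fintype.card ι) * ∑ j, x j| ≤ S := by
  have hn : (0 : ℝ) < Fintype.card ι := by exact_mod_cast Fintype.card_pos
  have hmean :
      x i - (1 / Fintype.card ι) * ∑ j, x j = (1 / Fintype.card ι) * ∑ j, (x i - x j) := by
    rw [sum_sub_distrib, sum_const, card_univ, nsmul_eq_mul]; field_simp
  rw [hmean, abs_mul, abs_of_pos (by positivity), one_div_mul_eq_div, div_le_iff₀ hn, mul_comm]
  calc |∑ j, (x i - x j)| ≤ ∑ j, |x i - x j| := abs_sum_le_sum_abs _ _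
    _ ≤ Fintype.card ι * S := by simpa using sum_le_card_nsmul univ _ S fun j _ => h j

lemma sum_sq_sub_mean_le {ι : Type*} [Fintype ι] [Nonempty ι] (x : ι → ℝ) {S : ℝ}
    (h : ∀ i j, |x i - x j| ≤ S) :
    ∑ i, (x i - (1 / Fintype.card ι) * ∑ j, x j) ^ 2 ≤ Fintype.card ι * S ^ 2 := by
  have hdev : ∀ i, (x i - (1 / Fintype.card ι) * ∑ j, x j) ^ 2 ≤ S ^ 2 := fun i => by
    simpa only [sq_abs] using pow_le_pow_left₀ (abs_nonneg _) (abs_sub_mean_le x (h i)) 2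
  simpa using sum_le_card_nsmul univ _ (S ^ 2) fun i _ => hdev i

/-- Discrete Poincaré-type inequality on the cycle: the variance around the mean is
bounded by `N²` times the sum of squared consecutive differences. -/
theorem discrete_poincare_cycle (N : ℕ) (hN : 1 ≤ N) (m : ZMod N → ℝ) :
    haveI : NeZero N := ⟨by omega⟩
    ∑ i : ZMod N, (m i - (1 / N) * ∑ j : ZMod N, m j) ^ 2
      ≤ (N : ℝ) ^ 2 * ∑ i : ZMod N, (m i - m (i - 1)) ^ 2 := by
  have : NeZero N := ⟨by omega⟩
  set S := ∑ k : ZMod N, |m k - m (k - 1)|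
  have hcycle : ∀ i j, |m i - m j| ≤ S := ZMod.norm_sub_le_sum_norm_sub_pred m
  have hS : S ^ 2 ≤ N * ∑ i : ZMod N, (m i - m (i - 1)) ^ 2 := by
    simpa [sq_abs] using
      sq_sum_le_card_mul_sum_sq (s := univ) (f := fun k : ZMod N => |m k - m (k - 1)|)
  calc ∑ i : ZMod N, (m i - (1 / N) * ∑ j : ZMod N, m j) ^ 2 ≤ N * S ^ 2 := by
        simpa using sum_sq_sub_mean_le m hcycle
    _ ≤ N * (N * ∑ i : ZMod N, (m i - m (i - 1)) ^ 2) := by gcongr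
    _ = (N : ℝ) ^ 2 * ∑ i : ZMod N, (m i - m (i - 1)) ^ 2 := by ring
end

section
/- Let ω : ℝ → ℝ be integrable on compact intervals with 0 < a ≤ ω(θ) ≤ b for all θ, let m̄ ∈ ℝ, and let ζ : ℝ → ℝ satisfy ∫_φ^{ζ(φ)} ω(θ) dθ = m̄ for every φ ∈ ℝ. Then for all φ, φ₀ ∈ ℝ, |ζ(φ) − ζ(φ₀)| ≤ (b/a)·|φ − φ₀|. -/
open intervalIntegral

lemma int_bounds (ω : ℝ → ℝ) (a b : ℝ)
    (hab : ∀ θ, a ≤ ω θ ∧ ω θ ≤ b)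
    (hint : ∀ x y : ℝ, IntervalIntegrable ω MeasureTheory.volume x y)
    {x y : ℝ} (hxy : x ≤ y) :
    a * (y - x) ≤ (∫ θ in x..y, ω θ) ∧ (∫ θ in x..y, ω θ) ≤ b * (y - x) := by
  constructor
  · have := intervalIntegral.integral_mono_on hxy (intervalIntegrable_const) (hint x y)
      (fun θ _ => (hab θ).1)
    simpa [intervalIntegral.integral_const, mul_comm] using this
  · have := intervalIntegral.integral_mono_on hxy (hint x y) (intervalIntegrable_const)
      (fun θ _ => (hab θ).2)
    simpa [intervalIntegral.integral_const, mul_comm] using this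

/-- Lipschitz estimate for the next-partition-bar map: if `0 < a ≤ ω ≤ b` and
`∫_φ^{ζ(φ)} ω = m̄` for every `φ`, then `|ζ(φ) − ζ(φ₀)| ≤ (b/a)|φ − φ₀|`. -/
theorem next_partition_bar_lipschitz (ω : ℝ → ℝ) (a b : ℝ) (ha : 0 < a)
    (hab : ∀ θ, a ≤ ω θ ∧ ω θ ≤ b)
    (hint : ∀ x y : ℝ, IntervalIntegrable ω MeasureTheory.volume x y)
    (mbar : ℝ) (ζ : ℝ → ℝ)
    (hζ : ∀ φ : ℝ, (∫ θ in φ..ζ φ, ω θ) = mbar) :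
    ∀ φ φ₀ : ℝ, |ζ φ - ζ φ₀| ≤ (b / a) * |φ - φ₀| := by
  intro φ φ₀
  -- key identity: ∫_{ζ φ₀}^{ζ φ} ω = ∫_{φ₀}^{φ} ω
  have hkey : (∫ θ in ζ φ₀..ζ φ, ω θ) = (∫ θ in φ₀..φ, ω θ) := by
    have h1 : (∫ θ in φ₀..ζ φ₀, ω θ) + (∫ θ in ζ φ₀..ζ φ, ω θ)
        = (∫ θ in φ₀..ζ φ, ω θ) :=
      intervalIntegral.integral_add_adjacent_intervals (hint _ _) (hint _ _)
    have h2 : (∫ θ in φ₀..φ, ω θ) + (∫ θ in φ..ζ φ, ω θ)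
        = (∫ θ in φ₀..ζ φ, ω θ) :=
      intervalIntegral.integral_add_adjacent_intervals (hint _ _) (hint _ _)
    have := hζ φ; have := hζ φ₀
    linarith
  -- |∫_x^y ω| ≥ a|y - x| and ≤ b|y-x|
  have habs : ∀ x y : ℝ, a * |y - x| ≤ |∫ θ in x..y, ω θ| ∧
      |∫ θ in x..y, ω θ| ≤ b * |y - x| := by
    intro x y
    rcases le_total x y with h | h
    · obtain ⟨h1, h2⟩ := int_bounds ω a b hab hint h
      have hnn : 0 ≤ y - x := by linarith
      have h0 : (0:ℝ) ≤ ∫ θ in x..y, ω θ := le_trans (mul_nonneg ha.le (by linarith)) h1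
      rw [abs_of_nonneg hnn, abs_of_nonneg h0]
      exact ⟨h1, h2⟩
    · obtain ⟨h1, h2⟩ := int_bounds ω a b hab hint h
      have hnn : y - x ≤ 0 := by linarith
      rw [abs_of_nonpos hnn, intervalIntegral.integral_symm]
      have h0 : (0:ℝ) ≤ ∫ θ in y..x, ω θ := le_trans (mul_nonneg ha.le (by linarith)) h1
      rw [abs_of_nonpos (by linarith), neg_neg]
      constructor <;> [simpa [mul_comm] using h1; simpa using h2]
  obtain ⟨hL, _⟩ := habs (ζ φ₀) (ζ φ)
  obtain ⟨_, hR⟩ := habs φ₀ φ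
  rw [hkey] at hL
  rw [div_mul_eq_mul_div, le_div_iff₀ ha]
  nlinarith [abs_nonneg (φ - φ₀)]
end
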